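/- arXiv:1811.02524 — 2 statements merged into one kernel-verified Lean document; each statement's English description precedes it below -/
import Mathlib

section
/- There is no ancilla-free quadratic penalty function for the XOR function x3 ↔ (x1 ⊕ x2): for all real coefficients o, h1, h2, h3, J12, J13, J23, the function P(x) = o + Σ hᵢxᵢ + Σ Jᵢⱼxᵢxⱼ cannot satisfy P(x) = 0 when x3 = -x1*x2 and P(x) > 0 when x3 = x1*x2, for x ∈ {-1,1}^3. -/
/-- There is no ancilla-free quadratic penalty function for the XOR function
`x3 ↔ (x1 ⊕ x2)`: no quadratic `P(x) = o + Σ hᵢxᵢ + Σ Jᵢⱼxᵢxⱼ` vanishes on the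
models (`x3 = -x1*x2`) and is strictly positive on the non-models. -/
theorem stmt_5 :
    ¬ ∃ o h1 h2 h3 J12 J13 J23 : ℝ, ∀ x1 x2 x3 : ℝ,
      (x1 = -1 ∨ x1 = 1) → (x2 = -1 ∨ x2 = 1) → (x3 = -1 ∨ x3 = 1) →
      (x3 = -(x1 * x2) →
        o + h1*x1 + h2*x2 + h3*x3 + J12*x1*x2 + J13*x1*x3 + J23*x2*x3 = 0) ∧
      (x3 = x1 * x2 →
        0 < o + h1*x1 + h2*x2 + h3*x3 + J12*x1*x2 + J13*x1*x3 + J23*x2*x3) := by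
  rintro ⟨o, h1, h2, h3, J12, J13, J23, P⟩
  have e1 := (P 1 1 (-1) (Or.inr rfl) (Or.inr rfl) (Or.inl rfl)).1 (by norm_num)
  have e2 := (P (-1) 1 1 (Or.inl rfl) (Or.inr rfl) (Or.inr rfl)).1 (by norm_num)
  have e3 := (P 1 (-1) 1 (Or.inr rfl) (Or.inl rfl) (Or.inr rfl)).1 (by norm_num)
  have e4 := (P (-1) (-1) (-1) (Or.inl rfl) (Or.inl rfl) (Or.inl rfl)).1 (by norm_num)
  have g1 := (P 1 1 1 (Or.inr rfl) (Or.inr rfl) (Or.inr rfl)).2 (by norm_num)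
  have g2 := (P (-1) (-1) 1 (Or.inl rfl) (Or.inl rfl) (Or.inr rfl)).2 (by norm_num)
  have g3 := (P 1 (-1) (-1) (Or.inr rfl) (Or.inl rfl) (Or.inl rfl)).2 (by norm_num)
  have g4 := (P (-1) 1 (-1) (Or.inl rfl) (Or.inr rfl) (Or.inl rfl)).2 (by norm_num)
  linarith
end

section
/- Sum of disjoint penalty functions with chain couplings: with F*(x*) as in the chain decomposition, suppose each F_k has a penalty function P_k(x^{k*}, a^k) with gap g_k, on pairwise disjoint variable sets. Then P(x*, a) = Σ_k P_k(x^{k*}, a^k) + Σ_{⟨u,v⟩ ∈ Eq} (1 - u·v) is a penalty function for F*(x*) with gap at least min(min_k g_k, 2). -/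
/-- Sum of disjoint penalty functions with chain couplings: if each conjunct
`F k` (on its own copies `fun i => y (i,k)`) has a penalty function `P k` with
gap `g k`, on pairwise disjoint variable sets, then
`Σ_k P k + Σ chains (1 - u·v)` is a penalty function for the decomposed formula
`F* = ∧_k F_k ∧ ∧ equivalences`, with gap at least `min (min_k g k) 2`. -/
theorem stmt_12 {ι K : Type*} [Fintype ι] [Fintype K] [Nonempty K]
    (A : K → Type*) (F : K → (ι → ℝ) → Prop) (P : ∀ k, (ι → ℝ) → A k → ℝ)
    (g : K → ℝ) (hg : ∀ k, 0 < g k)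
    (EqC : ι → Finset (K × K))
    (hpen : ∀ k, ∀ x : ι → ℝ, (∀ i, x i = -1 ∨ x i = 1) →
      (F k x → (∃ a : A k, P k x a = 0) ∧ ∀ a : A k, 0 ≤ P k x a) ∧
      (¬ F k x → ∀ a : A k, g k ≤ P k x a)) :
    ∀ y : ι × K → ℝ, (∀ v, y v = -1 ∨ y v = 1) →
      (((∀ k, F k (fun i => y (i, k))) ∧
          (∀ i, ∀ p ∈ EqC i, y (i, p.1) = y (i, p.2))) →
        (∃ a : ∀ k, A k,
          (∑ k, P k (fun i => y (i, k)) (a k)) +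
            (∑ i, ∑ p ∈ EqC i, (1 - y (i, p.1) * y (i, p.2))) = 0) ∧
        (∀ a : ∀ k, A k,
          0 ≤ (∑ k, P k (fun i => y (i, k)) (a k)) +
            (∑ i, ∑ p ∈ EqC i, (1 - y (i, p.1) * y (i, p.2))))) ∧
      (¬ ((∀ k, F k (fun i => y (i, k))) ∧
          (∀ i, ∀ p ∈ EqC i, y (i, p.1) = y (i, p.2))) →
        ∀ a : ∀ k, A k,
          min (Finset.univ.inf' Finset.univ_nonempty g) 2 ≤
            (∑ k, P k (fun i => y (i, k)) (a k)) +
              (∑ i, ∑ p ∈ EqC i, (1 - y (i, p.1) * y (i, p.2)))) := by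
  intro y hy
  -- each variable is ±1
  have hyk : ∀ k : K, ∀ i : ι, (fun i => y (i, k)) i = -1 ∨ (fun i => y (i, k)) i = 1 := by
    intro k i; exact hy (i, k)
  -- chain terms are nonnegative
  have hchain_nonneg : ∀ i : ι, ∀ p : K × K, 0 ≤ 1 - y (i, p.1) * y (i, p.2) := by
    intro i p
    rcases hy (i, p.1) with h1 | h1 <;> rcases hy (i, p.2) with h2 | h2 <;>
      rw [h1, h2] <;> norm_num
  have hchainsum_nonneg : 0 ≤ ∑ i, ∑ p ∈ EqC i, (1 - y (i, p.1) * y (i, p.2)) :=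
    Finset.sum_nonneg fun i _ => Finset.sum_nonneg fun p _ => hchain_nonneg i p
  -- P terms are nonnegative
  have hP_nonneg : ∀ k (a : A k), 0 ≤ P k (fun i => y (i, k)) a := by
    intro k a
    by_cases hF : F k (fun i => y (i, k))
    · exact ((hpen k _ (hyk k)).1 hF).2 a
    · exact le_trans (hg k).le ((hpen k _ (hyk k)).2 hF a)
  have hPsum_nonneg : ∀ a : ∀ k, A k, 0 ≤ ∑ k, P k (fun i => y (i, k)) (a k) :=
    fun a => Finset.sum_nonneg fun k _ => hP_nonneg k (a k)
  constructor
  · rintro ⟨hF, hEq⟩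
    constructor
    · choose a ha using fun k => ((hpen k _ (hyk k)).1 (hF k)).1
      refine ⟨a, ?_⟩
      have h1 : ∑ k, P k (fun i => y (i, k)) (a k) = 0 := by
        simp [ha]
      have h2 : ∑ i, ∑ p ∈ EqC i, (1 - y (i, p.1) * y (i, p.2)) = 0 := by
        refine Finset.sum_eq_zero fun i _ => Finset.sum_eq_zero fun p hp => ?_
        have := hEq i p hp
        rcases hy (i, p.2) with h | h <;> rw [this, h] <;> ring
      rw [h1, h2]; ring
    · intro a; exact add_nonneg (hPsum_nonneg a) hchainsum_nonneg
  · intro hnot a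
    set m := min (Finset.univ.inf' Finset.univ_nonempty g) 2 with hm
    rw [not_and_or] at hnot
    rcases hnot with hnF | hnEq
    · push_neg at hnF
      obtain ⟨k, hk⟩ := hnF
      have hgap : g k ≤ P k (fun i => y (i, k)) (a k) :=
        (hpen k _ (hyk k)).2 hk (a k)
      have h1 : m ≤ P k (fun i => y (i, k)) (a k) := by
        refine le_trans (le_trans (min_le_left _ _) ?_) hgap
        exact Finset.inf'_le g (Finset.mem_univ k)
      calc m ≤ P k (fun i => y (i, k)) (a k) := h1
        _ ≤ ∑ k, P k (fun i => y (i, k)) (a k) :=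
          Finset.single_le_sum (fun k _ => hP_nonneg k (a k)) (Finset.mem_univ k)
        _ ≤ _ := le_add_of_nonneg_right hchainsum_nonneg
    · push_neg at hnEq
      obtain ⟨i, p, hp, hne⟩ := hnEq
      have hterm : (2 : ℝ) ≤ 1 - y (i, p.1) * y (i, p.2) := by
        rcases hy (i, p.1) with h1 | h1 <;> rcases hy (i, p.2) with h2 | h2 <;>
          first | (exact absurd (h1.trans h2.symm) hne) | (rw [h1, h2]; norm_num)
      have h2 : m ≤ ∑ i, ∑ p ∈ EqC i, (1 - y (i, p.1) * y (i, p.2)) := by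
        refine le_trans (min_le_right _ _) (le_trans hterm ?_)
        calc 1 - y (i, p.1) * y (i, p.2)
            ≤ ∑ p ∈ EqC i, (1 - y (i, p.1) * y (i, p.2)) :=
              Finset.single_le_sum (fun q _ => hchain_nonneg i q) hp
          _ ≤ _ := Finset.single_le_sum
              (fun j _ => Finset.sum_nonneg fun q _ => hchain_nonneg j q)
              (Finset.mem_univ i)
      exact le_add_of_nonneg_of_le (hPsum_nonneg a) h2
end
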